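/- For all integers n and r with 0 ≤ r ≤ n−1, one has T(n,r) = W(n,r) in the integers. -/

import Mathlib

open Finset

/-- `T n r = ∑_{j=r+1}^{n} C(n,j)·C(j−1,r)`. -/
def T (n r : ℕ) : ℕ := ∑ j ∈ Icc (r + 1) n, n.choose j * (j - 1).choose r

/-- `W n r = 2^{n−r}·∑_{k=0}^{⌊r/2⌋} C(n−2−2k,r−2k) + (−1)^{r+1}` as an integer. -/
def W (n r : ℕ) : ℤ :=
  2 ^ (n - r) * ∑ k ∈ range (r / 2 + 1), ((n - 2 - 2 * k).choose (r - 2 * k) : ℤ)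
    + (-1) ^ (r + 1)

/-!
Both sides satisfy the recurrence `f (n + 1) = f n + 2 ^ (n - r) * C(n, r)` for `n > r`, and both
equal `1` at `n = r + 1`. For `T` this is Pascal's rule together with
`∑ᵢ C(n, i) C(i, r) = 2 ^ (n - r) C(n, r)`. For `W`, with `S = diagChooseSum` its diagonal sum, it
amounts to `2 S (n + 1) r = S n r + C(n, r)`, which follows by induction on `r` in steps of two
from `S (n + 2) (r + 2) = C(n, r + 2) + S n r` and Pascal's rule.
-/

theorem Nat.sum_range_choose_mul_choose (n r : ℕ) :
    ∑ i ∈ range (n + 1), n.choose i * i.choose r = 2 ^ (n - r) * n.choose r := by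
  rcases lt_or_ge n r with hnr | hrn
  · rw [Nat.choose_eq_zero_of_lt hnr, mul_zero]
    exact sum_eq_zero fun i hi ↦
      mul_eq_zero_of_right _ (Nat.choose_eq_zero_of_lt (by grind))
  · have hsplit : n + 1 = r + (n - r + 1) := by omega
    rw [hsplit, sum_range_add, sum_eq_zero fun i hi ↦
      mul_eq_zero_of_right _ (Nat.choose_eq_zero_of_lt (mem_range.mp hi)), zero_add]
    calc ∑ i ∈ range (n - r + 1), n.choose (r + i) * (r + i).choose r
        = ∑ i ∈ range (n - r + 1), n.choose r * (n - r).choose i :=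
          sum_congr rfl fun i _ ↦ by rw [Nat.choose_mul (by omega), Nat.add_sub_cancel_left]
      _ = 2 ^ (n - r) * n.choose r := by rw [← mul_sum, Nat.sum_range_choose, mul_comm]

theorem T_eq_sum_range (n r : ℕ) : T n r = ∑ i ∈ range n, n.choose (i + 1) * i.choose r := by
  have hsub : Icc (r + 1) n ⊆ Icc 1 n := Icc_subset_Icc (by omega) le_rfl
  rw [T, sum_subset hsub fun j hj hj' ↦
    mul_eq_zero_of_right _ (Nat.choose_eq_zero_of_lt (by grind)),
    ← Ico_add_one_right_eq_Icc, sum_Ico_eq_sum_range, Nat.add_sub_cancel]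
  exact sum_congr rfl fun i _ ↦ by rw [add_comm 1 i, Nat.add_sub_cancel]

theorem T_succ (n r : ℕ) : T (n + 1) r = T n r + 2 ^ (n - r) * n.choose r := by
  simp only [T_eq_sum_range, Nat.choose_succ_succ', add_mul, sum_add_distrib,
    Nat.sum_range_choose_mul_choose]
  rw [sum_range_succ _ n, Nat.choose_succ_self, zero_mul, add_zero, add_comm]

theorem T_succ_self (r : ℕ) : T (r + 1) r = 1 := by
  simp [T]

def diagChooseSum (n r : ℕ) : ℤ :=
  ∑ k ∈ range (r / 2 + 1), ((n - 2 - 2 * k).choose (r - 2 * k) : ℤ)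

theorem W_eq (n r : ℕ) : W n r = 2 ^ (n - r) * diagChooseSum n r + (-1) ^ (r + 1) := rfl

@[simp] theorem diagChooseSum_zero_right (n : ℕ) : diagChooseSum n 0 = 1 := by
  simp [diagChooseSum]

@[simp] theorem diagChooseSum_one_right (n : ℕ) : diagChooseSum n 1 = (n - 2 : ℕ) := by
  simp [diagChooseSum]

theorem diagChooseSum_add_two (n r : ℕ) :
    diagChooseSum (n + 2) (r + 2) = n.choose (r + 2) + diagChooseSum n r := by
  rw [diagChooseSum, diagChooseSum, show (r + 2) / 2 = r / 2 + 1 by omega, sum_range_succ']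
  simp only [mul_zero, Nat.sub_zero, Nat.add_sub_cancel, add_comm (n.choose (r + 2) : ℤ)]
  congr 1
  exact sum_congr rfl fun k _ ↦ by congr 2 <;> omega

theorem two_mul_diagChooseSum_succ : ∀ {n r : ℕ}, r < n →
    2 * diagChooseSum (n + 1) r = diagChooseSum n r + n.choose r
  | n, 0, _ => by norm_num
  | n, 1, h => by simp; omega
  | n + 2, r + 2, h => by
    have ih := two_mul_diagChooseSum_succ (n := n) (r := r) (by omega)
    have pascal : 2 * ((n + 1).choose (r + 2) : ℤ) + n.choose r
        = n.choose (r + 2) + (n + 2).choose (r + 2) := by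
      simp only [Nat.choose_succ_succ']; push_cast; ring
    rw [diagChooseSum_add_two, diagChooseSum_add_two]
    linear_combination ih + pascal

theorem two_mul_diagChooseSum_succ_self : ∀ r : ℕ,
    2 * diagChooseSum (r + 1) r + (-1) ^ (r + 1) = 1
  | 0 => by simp
  | 1 => by simp
  | r + 2 => by
    rw [diagChooseSum_add_two, Nat.choose_succ_self, pow_add _ _ 2]
    simpa using two_mul_diagChooseSum_succ_self r

theorem W_succ {n r : ℕ} (h : r < n) : W (n + 1) r = W n r + 2 ^ (n - r) * n.choose r := by
  rw [W_eq, W_eq, Nat.sub_add_comm h.le, pow_succ, mul_assoc, two_mul_diagChooseSum_succ h]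
  ring

theorem W_succ_self (r : ℕ) : W (r + 1) r = 1 := by
  rw [W_eq, Nat.add_sub_cancel_left, pow_one, two_mul_diagChooseSum_succ_self]

theorem T_eq_W (n r : ℕ) (h : r + 1 ≤ n) : (T n r : ℤ) = W n r := by
  induction n, h using Nat.le_induction with
  | base => rw [T_succ_self, W_succ_self, Nat.cast_one]
  | succ n hn ih => rw [T_succ, W_succ hn, ← ih]; push_cast; rfl
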